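/- Let n ≥ 1. For g ∈ GL(n+1, ℂ) written in blocks g = (A b; c d) with A an n×n complex matrix, b ∈ ℂⁿ a column, c a row vector of length n, and d ∈ ℂ, and for z ∈ ℂⁿ with c·z + d ≠ 0, set g·z := (c·z + d)⁻¹(A z + b), y(g,z) := (c·z + d)⁻¹ c, and define the block diagonal matrix k(g,z) := fromBlocks (A − (g·z) c) 0 0 (c·z + d) and the matrices Y(g,z) := fromBlocks 0 0 (y(g,z)) 0 and X := fromBlocks 0 x 0 0 for x ∈ ℂⁿ. Then k(g,z) is invertible, the map z ↦ k(g,z)⁻¹ is holomorphic on { z | c·z + d ≠ 0 }, and its derivative at z in the direction x equals −⁅Y(g,z), X⁆ * k(g,z)⁻¹, where ⁅·,·⁆ denotes the matrix commutator. -/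

import Mathlib

/-!
Write `g⁻¹ = (A' b'; c' d')`. Comparing blocks in `g g⁻¹ = 1` gives `A A' + b c' = 1` and
`c A' = -d c'`, from which `k(g,z)⁻¹` is the block diagonal matrix `(A' - z c', (c·z + d)⁻¹)`:
affine in `z` in the first block, the reciprocal of an affine function in the second. Its
derivative in direction `x` is therefore `(-x c', -(c·x)/(c·z + d)²)`. On the other side
`⁅Y, X⁆ = (-x y, y·x)` is block diagonal too, and `y (A' - z c') = -c'` by `c A' = -d c'`,
so `-⁅Y, X⁆ k(g,z)⁻¹` is the same matrix.
-/

open Matrix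

noncomputable section

/-- The upper-left `n × n` block `A` of an `(n+1) × (n+1)` matrix `g = (A b; c d)`. -/
def Ablk {n : ℕ} (g : Matrix (Fin n ⊕ Unit) (Fin n ⊕ Unit) ℂ) : Matrix (Fin n) (Fin n) ℂ :=
  g.toBlocks₁₁

/-- The upper-right column `b` of `g = (A b; c d)`. -/
def bcol {n : ℕ} (g : Matrix (Fin n ⊕ Unit) (Fin n ⊕ Unit) ℂ) : Fin n → ℂ :=
  fun i => g (Sum.inl i) (Sum.inr ())

/-- The lower-left row `c` of `g = (A b; c d)`. -/
def crow {n : ℕ} (g : Matrix (Fin n ⊕ Unit) (Fin n ⊕ Unit) ℂ) : Fin n → ℂ :=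
  fun j => g (Sum.inr ()) (Sum.inl j)

/-- The lower-right scalar `d` of `g = (A b; c d)`. -/
def dent {n : ℕ} (g : Matrix (Fin n ⊕ Unit) (Fin n ⊕ Unit) ℂ) : ℂ :=
  g (Sum.inr ()) (Sum.inr ())

/-- The denominator `c·z + d` of the Möbius action of `g = (A b; c d)` at `z ∈ ℂⁿ`. -/
def den {n : ℕ} (g : Matrix (Fin n ⊕ Unit) (Fin n ⊕ Unit) ℂ) (z : Fin n → ℂ) : ℂ :=
  crow g ⬝ᵥ z + dent g

/-- The Möbius action `g·z = (c·z + d)⁻¹ (A z + b)` of `g = (A b; c d)` on `z ∈ ℂⁿ`. -/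
noncomputable def mact {n : ℕ} (g : Matrix (Fin n ⊕ Unit) (Fin n ⊕ Unit) ℂ)
    (z : Fin n → ℂ) : Fin n → ℂ :=
  (den g z)⁻¹ • (Ablk g *ᵥ z + bcol g)

/-- A vector `v ∈ ℂⁿ` as an `n × 1` column matrix. -/
def colm {n : ℕ} (v : Fin n → ℂ) : Matrix (Fin n) Unit ℂ := Matrix.of fun i _ => v i

/-- A vector `v ∈ ℂⁿ` as a `1 × n` row matrix. -/
def rowm {n : ℕ} (v : Fin n → ℂ) : Matrix Unit (Fin n) ℂ := Matrix.of fun _ j => v j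

/-- A scalar `a ∈ ℂ` as a `1 × 1` matrix. -/
def sclm (a : ℂ) : Matrix Unit Unit ℂ := Matrix.of fun _ _ => a

attribute [local instance] Matrix.normedAddCommGroup Matrix.normedSpace

/-- The row vector `y(g,z) = (c·z + d)⁻¹ c`. -/
def yrow {n : ℕ} (g : Matrix (Fin n ⊕ Unit) (Fin n ⊕ Unit) ℂ) (z : Fin n → ℂ) :
    Fin n → ℂ :=
  (den g z)⁻¹ • crow g

/-- The strictly lower triangular matrix `Y(g,z) = (0 0; y(g,z) 0)`. -/
def Ymat {n : ℕ} (g : Matrix (Fin n ⊕ Unit) (Fin n ⊕ Unit) ℂ) (z : Fin n → ℂ) :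
    Matrix (Fin n ⊕ Unit) (Fin n ⊕ Unit) ℂ :=
  fromBlocks 0 0 (rowm (yrow g z)) 0

/-- The strictly upper triangular matrix `X = (0 x; 0 0)` for `x ∈ ℂⁿ`. -/
def Xmat {n : ℕ} (x : Fin n → ℂ) : Matrix (Fin n ⊕ Unit) (Fin n ⊕ Unit) ℂ :=
  fromBlocks 0 (colm x) 0 0

/-- The block diagonal automorphy factor `k(g,z) = (A - (g·z)c  0; 0  c·z+d)`. -/
def kmat {n : ℕ} (g : Matrix (Fin n ⊕ Unit) (Fin n ⊕ Unit) ℂ) (z : Fin n → ℂ) :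
    Matrix (Fin n ⊕ Unit) (Fin n ⊕ Unit) ℂ :=
  fromBlocks (Ablk g - vecMulVec (mact g z) (crow g)) 0 0 (sclm (den g z))

section BlockDiagonal

variable {m : Type*}

def fromBlocksDiag (A : Matrix m m ℂ) (a : ℂ) : Matrix (m ⊕ Unit) (m ⊕ Unit) ℂ :=
  fromBlocks A 0 0 (sclm a)

theorem sclm_mul (a b : ℂ) : sclm a * sclm b = sclm (a * b) := by
  ext; simp [mul_apply, sclm]

theorem sclm_one : sclm 1 = 1 := by
  ext i j; simp [sclm, Subsingleton.elim i j]

theorem fromBlocksDiag_mul [Fintype m] (A B : Matrix m m ℂ) (a b : ℂ) :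
    fromBlocksDiag A a * fromBlocksDiag B b = fromBlocksDiag (A * B) (a * b) := by
  simp [fromBlocksDiag, fromBlocks_multiply, sclm_mul]

theorem fromBlocksDiag_one [DecidableEq m] : fromBlocksDiag (1 : Matrix m m ℂ) 1 = 1 := by
  rw [fromBlocksDiag, sclm_one, fromBlocks_one]

theorem neg_fromBlocksDiag (A : Matrix m m ℂ) (a : ℂ) :
    -fromBlocksDiag A a = fromBlocksDiag (-A) (-a) := by
  ext (i | i) (j | j) <;> simp [fromBlocksDiag, sclm]

def fromBlocksDiagₗ : (Matrix m m ℂ × ℂ) →ₗ[ℂ] Matrix (m ⊕ Unit) (m ⊕ Unit) ℂ where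
  toFun p := fromBlocksDiag p.1 p.2
  map_add' p q := by ext (i | i) (j | j) <;> simp [fromBlocksDiag, sclm]
  map_smul' c p := by ext (i | i) (j | j) <;> simp [fromBlocksDiag, sclm]

theorem HasFDerivAt.fromBlocksDiag [Fintype m] {E : Type*} [NormedAddCommGroup E]
    [NormedSpace ℂ E] {A : E → Matrix m m ℂ} {a : E → ℂ} {A' : E →L[ℂ] Matrix m m ℂ}
    {a' : E →L[ℂ] ℂ} {z : E}
    (hA : HasFDerivAt A A' z) (ha : HasFDerivAt a a' z) :
    HasFDerivAt (fun w => fromBlocksDiag (A w) (a w))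
      (fromBlocksDiagₗ.toContinuousLinearMap.comp (A'.prod a')) z := by
  exact fromBlocksDiagₗ.toContinuousLinearMap.hasFDerivAt.comp z (hA.prodMk ha)

end BlockDiagonal

section Automorphy

variable {n : ℕ} {G G' : Matrix (Fin n ⊕ Unit) (Fin n ⊕ Unit) ℂ} {z : Fin n → ℂ}

theorem Ablk_mul_Ablk_add_vecMulVec (h : G * G' = 1) :
    Ablk G * Ablk G' + vecMulVec (bcol G) (crow G') = 1 := by
  ext i j
  have hij := congrFun (congrFun h (Sum.inl i)) (Sum.inl j)
  simp only [mul_apply, Fintype.sum_sum_type, Finset.univ_unique, Finset.sum_singleton] at hij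
  simpa [mul_apply, vecMulVec_apply, Ablk, bcol, crow, toBlocks₁₁, Matrix.one_apply] using hij

theorem crow_vecMul_Ablk (h : G * G' = 1) : crow G ᵥ* Ablk G' = -(dent G • crow G') := by
  rw [eq_neg_iff_add_eq_zero]
  ext j
  have hj := congrFun (congrFun h (Sum.inr ())) (Sum.inl j)
  simp only [mul_apply, Fintype.sum_sum_type, Finset.univ_unique, Finset.sum_singleton] at hj
  simpa [vecMul, dotProduct, Ablk, crow, dent, toBlocks₁₁, Matrix.one_apply] using hj

theorem den_smul_mact (hz : den G z ≠ 0) : den G z • mact G z = Ablk G *ᵥ z + bcol G := by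
  rw [mact, smul_smul, mul_inv_cancel₀ hz, one_smul]

def kmatInv (G G' : Matrix (Fin n ⊕ Unit) (Fin n ⊕ Unit) ℂ) (z : Fin n → ℂ) :
    Matrix (Fin n ⊕ Unit) (Fin n ⊕ Unit) ℂ :=
  fromBlocksDiag (Ablk G' - vecMulVec z (crow G')) (den G z)⁻¹

theorem kmat_eq_fromBlocksDiag :
    kmat G z = fromBlocksDiag (Ablk G - vecMulVec (mact G z) (crow G)) (den G z) :=
  rfl

theorem Ablk_sub_mul_Ablk_sub (h : G * G' = 1) (hz : den G z ≠ 0) :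
    (Ablk G - vecMulVec (mact G z) (crow G)) * (Ablk G' - vecMulVec z (crow G')) = 1 := by
  have hmact : vecMulVec (mact G z) (-(dent G • crow G')) - vecMulVec (mact G z)
      ((crow G ⬝ᵥ z) • crow G') = -vecMulVec (Ablk G *ᵥ z + bcol G) (crow G') := by
    rw [← den_smul_mact hz]
    ext i j
    simp [vecMulVec_apply, den]
    ring
  rw [sub_mul, mul_sub, mul_sub, mul_vecMulVec, vecMulVec_mul, vecMulVec_mul, vecMul_vecMulVec,
    crow_vecMul_Ablk h, sub_sub (Ablk G * Ablk G'), hmact, add_vecMulVec]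
  linear_combination (norm := module) Ablk_mul_Ablk_add_vecMulVec h

theorem kmat_mul_kmatInv (h : G * G' = 1) (hz : den G z ≠ 0) :
    kmat G z * kmatInv G G' z = 1 := by
  rw [kmat_eq_fromBlocksDiag, kmatInv, fromBlocksDiag_mul, Ablk_sub_mul_Ablk_sub h hz,
    mul_inv_cancel₀ hz, fromBlocksDiag_one]

theorem kmat_inv_eq_kmatInv (h : G * G' = 1) (hz : den G z ≠ 0) :
    (kmat G z)⁻¹ = kmatInv G G' z :=
  inv_eq_right_inv (kmat_mul_kmatInv h hz)

theorem hasFDerivAt_den :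
    HasFDerivAt (den G) (dotProductBilin ℂ ℂ (crow G)).toContinuousLinearMap z :=
  (dotProductBilin ℂ ℂ (crow G)).toContinuousLinearMap.hasFDerivAt.add_const (dent G)

theorem hasFDerivAt_kmatInv (hz : den G z ≠ 0) :
    ∃ L : (Fin n → ℂ) →L[ℂ] Matrix (Fin n ⊕ Unit) (Fin n ⊕ Unit) ℂ,
      HasFDerivAt (kmatInv G G') L z ∧ ∀ x, L x =
        fromBlocksDiag (-vecMulVec x (crow G')) (-(den G z ^ 2)⁻¹ * (crow G ⬝ᵥ x)) := by
  have hA := ((vecMulVecBilin ℂ ℂ).flip (crow G')).toContinuousLinearMap.hasFDerivAt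
    (x := z) |>.const_sub (Ablk G')
  have ha := (hasFDerivAt_inv hz).comp z hasFDerivAt_den
  refine ⟨_, hA.fromBlocksDiag ha, fun x => ?_⟩
  change fromBlocksDiag (-vecMulVec x (crow G')) ((crow G ⬝ᵥ x) • -(den G z ^ 2)⁻¹) = _
  rw [smul_eq_mul, mul_comm]

theorem lie_Ymat_Xmat (x : Fin n → ℂ) :
    ⁅Ymat G z, Xmat x⁆ = fromBlocksDiag (-vecMulVec x (yrow G z)) (yrow G z ⬝ᵥ x) := by
  rw [Ring.lie_def, Ymat, Xmat, fromBlocks_multiply, fromBlocks_multiply]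
  ext (i | i) (j | j) <;>
    simp [fromBlocksDiag, rowm, colm, sclm, mul_apply, vecMulVec_apply, dotProduct]

theorem yrow_vecMul (h : G * G' = 1) (hz : den G z ≠ 0) :
    yrow G z ᵥ* (Ablk G' - vecMulVec z (crow G')) = -crow G' := by
  rw [yrow, smul_vecMul, vecMul_sub, crow_vecMul_Ablk h, vecMul_vecMulVec, ← neg_add',
    ← add_smul, add_comm, ← den, smul_neg, smul_smul, inv_mul_cancel₀ hz, one_smul]

theorem neg_lie_Ymat_Xmat_mul_kmatInv (h : G * G' = 1) (hz : den G z ≠ 0) (x : Fin n → ℂ) :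
    -(⁅Ymat G z, Xmat x⁆ * kmatInv G G' z) =
      fromBlocksDiag (-vecMulVec x (crow G')) (-(den G z ^ 2)⁻¹ * (crow G ⬝ᵥ x)) := by
  rw [lie_Ymat_Xmat, kmatInv, fromBlocksDiag_mul, neg_fromBlocksDiag, neg_mul, neg_neg,
    vecMulVec_mul, yrow_vecMul h hz, vecMulVec_neg, yrow, smul_dotProduct, smul_eq_mul]
  congr 1
  ring

theorem hasFDerivAt_kmat_inv (h : G * G' = 1) (hz : den G z ≠ 0) :
    ∃ L : (Fin n → ℂ) →L[ℂ] Matrix (Fin n ⊕ Unit) (Fin n ⊕ Unit) ℂ,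
      HasFDerivAt (fun w => (kmat G w)⁻¹) L z ∧
        ∀ x, L x = -(⁅Ymat G z, Xmat x⁆ * (kmat G z)⁻¹) := by
  have hopen : IsOpen {w | den G w ≠ 0} :=
    isOpen_ne_fun (continuous_iff_continuousAt.2 fun _ => hasFDerivAt_den.continuousAt)
      continuous_const
  obtain ⟨L, hL, hLx⟩ := hasFDerivAt_kmatInv (G' := G') hz
  refine ⟨L, hL.congr_of_eventuallyEq ?_, fun x => ?_⟩
  · filter_upwards [hopen.mem_nhds hz] with w hw using kmat_inv_eq_kmatInv h hw
  · rw [hLx, kmat_inv_eq_kmatInv h hz, neg_lie_Ymat_Xmat_mul_kmatInv h hz]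

end Automorphy

theorem kmat_inv_hasFDerivAt_general (n : ℕ) (g : GL (Fin n ⊕ Unit) ℂ) :
    (∀ z : Fin n → ℂ, den (g : Matrix (Fin n ⊕ Unit) (Fin n ⊕ Unit) ℂ) z ≠ 0 →
      IsUnit (kmat (g : Matrix (Fin n ⊕ Unit) (Fin n ⊕ Unit) ℂ) z)) ∧
    DifferentiableOn ℂ (fun z => (kmat (g : Matrix (Fin n ⊕ Unit) (Fin n ⊕ Unit) ℂ) z)⁻¹)
        {z : Fin n → ℂ | den (g : Matrix (Fin n ⊕ Unit) (Fin n ⊕ Unit) ℂ) z ≠ 0} ∧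
    (∀ z : Fin n → ℂ, den (g : Matrix (Fin n ⊕ Unit) (Fin n ⊕ Unit) ℂ) z ≠ 0 →
      ∃ L : (Fin n → ℂ) →L[ℂ] Matrix (Fin n ⊕ Unit) (Fin n ⊕ Unit) ℂ,
        HasFDerivAt (fun z => (kmat (g : Matrix (Fin n ⊕ Unit) (Fin n ⊕ Unit) ℂ) z)⁻¹) L z ∧
          ∀ x : Fin n → ℂ,
            L x = -(⁅Ymat (g : Matrix (Fin n ⊕ Unit) (Fin n ⊕ Unit) ℂ) z, Xmat x⁆ *
                (kmat (g : Matrix (Fin n ⊕ Unit) (Fin n ⊕ Unit) ℂ) z)⁻¹)) := by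
  have h := g.mul_inv
  refine ⟨fun z hz => ?_, fun z hz => ?_, fun z hz => hasFDerivAt_kmat_inv h hz⟩
  · exact (isUnit_iff_isUnit_det _).2 (isUnit_det_of_right_inverse (kmat_mul_kmatInv h hz))
  · obtain ⟨L, hL, -⟩ := hasFDerivAt_kmat_inv h hz
    exact hL.differentiableAt.differentiableWithinAt

/-- `k(g,z)` is invertible, `z ↦ k(g,z)⁻¹` is holomorphic on `{z | c·z + d ≠ 0}`,
and its derivative at `z` in direction `x` is `-⁅Y(g,z), X⁆ * k(g,z)⁻¹`. -/
theorem kmat_inv_hasFDerivAt (n : ℕ) (hn : 1 ≤ n) (g : GL (Fin n ⊕ Unit) ℂ) :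
    (∀ z : Fin n → ℂ, den (g : Matrix (Fin n ⊕ Unit) (Fin n ⊕ Unit) ℂ) z ≠ 0 →
      IsUnit (kmat (g : Matrix (Fin n ⊕ Unit) (Fin n ⊕ Unit) ℂ) z)) ∧
    DifferentiableOn ℂ (fun z => (kmat (g : Matrix (Fin n ⊕ Unit) (Fin n ⊕ Unit) ℂ) z)⁻¹)
        {z : Fin n → ℂ | den (g : Matrix (Fin n ⊕ Unit) (Fin n ⊕ Unit) ℂ) z ≠ 0} ∧
    (∀ z : Fin n → ℂ, den (g : Matrix (Fin n ⊕ Unit) (Fin n ⊕ Unit) ℂ) z ≠ 0 →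
      ∃ L : (Fin n → ℂ) →L[ℂ] Matrix (Fin n ⊕ Unit) (Fin n ⊕ Unit) ℂ,
        HasFDerivAt (fun z => (kmat (g : Matrix (Fin n ⊕ Unit) (Fin n ⊕ Unit) ℂ) z)⁻¹) L z ∧
          ∀ x : Fin n → ℂ,
            L x = -(⁅Ymat (g : Matrix (Fin n ⊕ Unit) (Fin n ⊕ Unit) ℂ) z, Xmat x⁆ *
                (kmat (g : Matrix (Fin n ⊕ Unit) (Fin n ⊕ Unit) ℂ) z)⁻¹)) :=
  kmat_inv_hasFDerivAt_general n g
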